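/- arXiv:1405.5579 — 2 statements merged into one kernel-verified Lean document; each statement's English description precedes it below -/
import Mathlib

section
/- Let W and Q be real polynomials and let I ⊆ ℝ be an open interval on which Q'(z) > 0. Let T : I → ℝ be an antiderivative of W·Q' on I and set σ(z) = √(Q'(z))·exp(T(z)). Then for every differentiable function φ : I → ℂ and every z ∈ I one has (1/Q'(z))·(σφ)'(z) − (Q''(z)/(2·Q'(z)²))·(σφ)(z) − W(z)·(σφ)(z) = σ(z)·(1/Q'(z))·φ'(z). In other words, conjugation by σ transforms the dual Kac–Schwarz operator Â^{W,Q} into the trivial connection (1/Q'(z))·d/dz. -/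
/-! If `σ = √q · exp T` with `T' = W q`, then `σ'/σ = q'/(2q) + W q`, so the product rule for
`(σφ)'` produces exactly the two zeroth-order terms of the dual Kac–Schwarz operator, which
cancel, leaving `σ · q⁻¹ φ'`. -/

open Filter Topology

theorem hasDerivAt_sqrt_mul_exp {q T : ℝ → ℝ} {q' τ z : ℝ} (hq : HasDerivAt q q' z)
    (hqz : 0 < q z) (hT : HasDerivAt T τ z) :
    HasDerivAt (fun t => √(q t) * Real.exp (T t))
      ((q' / (2 * q z) + τ) * (√(q z) * Real.exp (T z))) z := by
  refine ((hq.sqrt hqz.ne').fun_mul hT.exp).congr_deriv ?_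
  have hsqrt : √(q z) ≠ 0 := (Real.sqrt_pos.mpr hqz).ne'
  field_simp
  rw [Real.sq_sqrt hqz.le]
  ring

theorem dualKacSchwarz_conjugation_of_hasDerivAt {σ : ℝ → ℝ} {φ : ℝ → ℂ} {z q q' w : ℝ} (hq : q ≠ 0)
    (hσ : HasDerivAt σ ((q' / (2 * q) + w * q) * σ z) z) (hφ : DifferentiableAt ℝ φ z) :
    1 / (q : ℂ) * deriv (fun t => (σ t : ℂ) * φ t) z
        - (q' : ℂ) / (2 * (q : ℂ) ^ 2) * ((σ z : ℂ) * φ z)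
        - (w : ℂ) * ((σ z : ℂ) * φ z)
      = (σ z : ℂ) * (1 / (q : ℂ) * deriv φ z) := by
  rw [(hσ.ofReal_comp.fun_mul hφ.hasDerivAt).deriv]
  have hqC : (q : ℂ) ≠ 0 := Complex.ofReal_ne_zero.mpr hq
  push_cast
  field_simp
  ring

theorem dual_kac_schwarz_conjugation_general
    (W Q : Polynomial ℝ) (I : Set ℝ) (hIopen : IsOpen I)
    (hQ' : ∀ z ∈ I, 0 < (Polynomial.derivative Q).eval z)
    (T : ℝ → ℝ)
    (hT : ∀ z ∈ I, HasDerivAt T (W.eval z * (Polynomial.derivative Q).eval z) z)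
    (σ : ℝ → ℝ)
    (hσ : ∀ z ∈ I, σ z = Real.sqrt ((Polynomial.derivative Q).eval z) * Real.exp (T z))
    (φ : ℝ → ℂ) (hφ : ∀ z ∈ I, DifferentiableAt ℝ φ z) :
    ∀ z ∈ I,
      (1 / (((Polynomial.derivative Q).eval z : ℝ) : ℂ))
          * deriv (fun t => ((σ t : ℝ) : ℂ) * φ t) z
        - ((((Polynomial.derivative (Polynomial.derivative Q)).eval z : ℝ) : ℂ)
            / (2 * (((Polynomial.derivative Q).eval z : ℝ) : ℂ) ^ 2))
            * (((σ z : ℝ) : ℂ) * φ z)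
        - ((W.eval z : ℝ) : ℂ) * (((σ z : ℝ) : ℂ) * φ z)
      = ((σ z : ℝ) : ℂ) * ((1 / (((Polynomial.derivative Q).eval z : ℝ) : ℂ)) * deriv φ z) := by
  intro z hz
  have hσ_nhds : σ =ᶠ[𝓝 z] fun t => √((Polynomial.derivative Q).eval t) * Real.exp (T t) :=
    eventually_of_mem (hIopen.mem_nhds hz) hσ
  have hσ_deriv := (hasDerivAt_sqrt_mul_exp ((Polynomial.derivative Q).hasDerivAt z) (hQ' z hz)
    (hT z hz)).congr_of_eventuallyEq hσ_nhds
  rw [← hσ z hz] at hσ_deriv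
  exact dualKacSchwarz_conjugation_of_hasDerivAt (hQ' z hz).ne' hσ_deriv (hφ z hz)

/-- Conjugation by `σ(z) = √(Q'(z)) · exp(T(z))` (where `T` is an
antiderivative of `W·Q'`) transforms the dual Kac–Schwarz operator
`Â^{W,Q} = (1/Q')·d/dz − Q''/(2·Q'²) − W` into the trivial connection `(1/Q')·d/dz`,
on an open interval `I` where `Q' > 0`. -/
theorem dual_kac_schwarz_conjugation
    (W Q : Polynomial ℝ) (I : Set ℝ) (hIopen : IsOpen I) (hIconn : IsPreconnected I)
    (hQ' : ∀ z ∈ I, 0 < (Polynomial.derivative Q).eval z)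
    (T : ℝ → ℝ)
    (hT : ∀ z ∈ I, HasDerivAt T (W.eval z * (Polynomial.derivative Q).eval z) z)
    (σ : ℝ → ℝ)
    (hσ : ∀ z ∈ I, σ z = Real.sqrt ((Polynomial.derivative Q).eval z) * Real.exp (T z))
    (φ : ℝ → ℂ) (hφ : ∀ z ∈ I, DifferentiableAt ℝ φ z) :
    ∀ z ∈ I,
      (1 / (((Polynomial.derivative Q).eval z : ℝ) : ℂ))
          * deriv (fun t => ((σ t : ℝ) : ℂ) * φ t) z
        - ((((Polynomial.derivative (Polynomial.derivative Q)).eval z : ℝ) : ℂ)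
            / (2 * (((Polynomial.derivative Q).eval z : ℝ) : ℂ) ^ 2))
            * (((σ z : ℝ) : ℂ) * φ z)
        - ((W.eval z : ℝ) : ℂ) * (((σ z : ℝ) : ℂ) * φ z)
      = ((σ z : ℝ) : ℂ) * ((1 / (((Polynomial.derivative Q).eval z : ℝ) : ℂ)) * deriv φ z) :=
  dual_kac_schwarz_conjugation_general W Q I hIopen hQ' T hT σ hσ φ hφ
end

section
/- Let ψ : ℝ → ℂ be twice differentiable with ψ''(x) = x·ψ(x) for all x ∈ ℝ (an Airy-type function). Define φ(z) = z^{1/2}·exp(−2z³/3)·ψ(z²) for z > 0, and define the operator A by (A f)(z) = (1/(2z))·f'(z) − (1/(4z²))·f(z) + z·f(z). Then (A(Aφ))(z) = z²·φ(z) for all z > 0. -/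
/-!
The gauge factor `√z · exp(-2z³/3)` is chosen so that the Kac–Schwarz operator
`A = (1/(2z)) d/dz - 1/(4z²) + z` becomes `d/dx` in the variable `x = z²`: differentiating
`√z` cancels the `-1/(4z²)` term and differentiating `exp(-2z³/3)` cancels the `z` term, so
`A(√z e^{-2z³/3} g(z²)) = √z e^{-2z³/3} g'(z²)`. Applying this twice gives
`A²φ = √z e^{-2z³/3} ψ''(z²)`, which is `z² φ` by the Airy equation.
-/

open Set

noncomputable section

namespace KacSchwarz

def kacSchwarzOp (f : ℝ → ℂ) (z : ℝ) : ℂ :=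
  (1 / (2 * (z : ℂ))) * deriv f z - (1 / (4 * (z : ℂ) ^ 2)) * f z + (z : ℂ) * f z

def airyDressing (g : ℝ → ℂ) (z : ℝ) : ℂ :=
  (Real.sqrt z : ℂ) * Complex.exp (-(2 * (z : ℂ) ^ 3 / 3)) * g (z ^ 2)

theorem hasDerivAt_airyDressing {g : ℝ → ℂ} {z : ℝ} (hz : 0 < z)
    (hg : DifferentiableAt ℝ g (z ^ 2)) :
    HasDerivAt (airyDressing g)
      ((1 / (2 * (z : ℂ)) - 2 * (z : ℂ) ^ 2) * airyDressing g z
        + 2 * (z : ℂ) * airyDressing (deriv g) z) z := by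
  have hsqrt : HasDerivAt (fun t : ℝ => (Real.sqrt t : ℂ)) ((1 / (2 * Real.sqrt z) : ℝ) : ℂ) z :=
    (Real.hasDerivAt_sqrt hz.ne').ofReal_comp
  have hexp : HasDerivAt (fun t : ℝ => Complex.exp (-(2 * (t : ℂ) ^ 3 / 3)))
      (Complex.exp (-(2 * (z : ℂ) ^ 3 / 3)) * (-(2 * (z : ℂ) ^ 2))) z := by
    have hpoly : HasDerivAt (fun w : ℂ => -(2 * w ^ 3 / 3)) (-(2 * (z : ℂ) ^ 2)) (z : ℂ) := by
      refine (((hasDerivAt_pow 3 (z : ℂ)).const_mul 2).div_const 3).neg.congr_deriv ?_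
      ring
    exact hpoly.comp_ofReal.cexp
  have hcomp : HasDerivAt (fun t : ℝ => g (t ^ 2)) ((2 * z) • deriv g (z ^ 2)) z := by
    have hsq : HasDerivAt (fun t : ℝ => t ^ 2) (2 * z) z := by simpa using hasDerivAt_pow 2 z
    exact HasDerivAt.scomp (h := fun t : ℝ => t ^ 2) z hg.hasDerivAt hsq
  refine ((hsqrt.mul hexp).mul hcomp).congr_deriv ?_
  have hs : (Real.sqrt z : ℂ) ≠ 0 := by exact_mod_cast (Real.sqrt_pos.mpr hz).ne'
  have hz_sq : (z : ℂ) = (Real.sqrt z : ℂ) ^ 2 := by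
    exact_mod_cast (Real.sq_sqrt hz.le).symm
  simp only [airyDressing, Complex.real_smul, Pi.mul_apply]
  push_cast
  rw [hz_sq]
  field_simp
  ring

theorem kacSchwarzOp_eq_airyDressing_deriv {f g : ℝ → ℂ} {z : ℝ}
    (hf : EqOn f (airyDressing g) (Ioi 0)) (hz : 0 < z) (hg : DifferentiableAt ℝ g (z ^ 2)) :
    kacSchwarzOp f z = airyDressing (deriv g) z := by
  have hderiv : deriv f z = (1 / (2 * (z : ℂ)) - 2 * (z : ℂ) ^ 2) * airyDressing g z
      + 2 * (z : ℂ) * airyDressing (deriv g) z := by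
    rw [(Filter.eventuallyEq_of_mem (Ioi_mem_nhds hz) hf).deriv_eq]
    exact (hasDerivAt_airyDressing hz hg).deriv
  have hz0 : (z : ℂ) ≠ 0 := by exact_mod_cast hz.ne'
  rw [kacSchwarzOp, hderiv, hf hz]
  field_simp
  ring

end KacSchwarz

end

open KacSchwarz in
/-- Let `ψ` be an Airy-type function (`ψ'' = x·ψ`) and set
`φ(z) = z^{1/2}·exp(−2z³/3)·ψ(z²)` for `z > 0`. For the Kac–Schwarz operator
`A = (1/(2z))·d/dz − 1/(4z²) + z` of the `(2,1)` model one has `A²φ = z²·φ` on `(0,∞)`,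
exhibiting the companion matrix `[[0,1],[z²,0]]`. -/
theorem kac_schwarz_airy_companion
    (ψ : ℝ → ℂ) (hψ : Differentiable ℝ ψ) (hψ' : Differentiable ℝ (deriv ψ))
    (hAiry : ∀ x : ℝ, deriv (deriv ψ) x = (x : ℂ) * ψ x)
    (φ : ℝ → ℂ)
    (hφ : ∀ z : ℝ, 0 < z →
      φ z = (Real.sqrt z : ℂ) * Complex.exp (-(2 * (z : ℂ) ^ 3 / 3)) * ψ (z ^ 2))
    (A : (ℝ → ℂ) → ℝ → ℂ)
    (hA : ∀ f : ℝ → ℂ, ∀ z : ℝ,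
      A f z = (1 / (2 * (z : ℂ))) * deriv f z - (1 / (4 * (z : ℂ) ^ 2)) * f z + (z : ℂ) * f z) :
    ∀ z : ℝ, 0 < z → A (A φ) z = (z : ℂ) ^ 2 * φ z := by
  obtain rfl : A = kacSchwarzOp := funext₂ hA
  have hAφ : EqOn (kacSchwarzOp φ) (airyDressing (deriv ψ)) (Ioi 0) :=
    fun w hw => kacSchwarzOp_eq_airyDressing_deriv (fun t ht => hφ t ht) hw (hψ _)
  intro z hz
  rw [kacSchwarzOp_eq_airyDressing_deriv hAφ hz (hψ' _), hφ z hz, airyDressing, hAiry]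
  push_cast
  ring
end
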